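/- Let k ≥ 1 and consider signed-weighted lattice paths in the double staircase partition ρ̃_{2k+1}. Then wt((2k+1,1),(1,2k+1)) = C_k, wt((2k+1,2),(1,2k+1)) = 0, and wt((2k+1,2),(2,2k+1)) = −C_{k−1}. -/

import Mathlib

/-!
Removing the first box of a path gives the recurrence
`wt((i,j), b) = wt((i-1,j), b) + (-1)^(i-1) wt((i,j+1), b)` for `(i,j) ≠ b`, with `wt(b,b) = 1`
and `wt = 0` off the diagram. Inducting on the row and then on the distance to the row end, these
conditions determine `wt(·, b)` on the whole diagram, so it suffices to exhibit closed forms that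
satisfy them. For the targets `(1, 2k+1)` and `(2, 2k+1)` in `ρ̃_{2k+1}`, the closed forms are
entries `C(n+k, k) - C(n+k, n+1)` of Catalan's triangle, indexed by the pair of rows and the pair of
columns of the box: within a pair of equally long rows the right steps of the even row cancel in
pairs. The recurrence then reduces to Pascal's rule for the triangle, whose diagonal consists of the
Catalan numbers.
-/

/-- `(i,j)` is a box of the Young diagram of `lam` (parts `lam 1, lam 2, …`, rows indexed
from the top, columns from the left): `1 ≤ i`, `1 ≤ j ≤ lam i`. -/
def inDiagram (lam : ℕ → ℕ) (p : ℕ × ℕ) : Prop :=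
  1 ≤ p.1 ∧ 1 ≤ p.2 ∧ p.2 ≤ lam p.1

/-- A step of a lattice path: up `(i,j) → (i-1,j)` or right `(i,j) → (i,j+1)`. -/
def isStep (p q : ℕ × ℕ) : Prop :=
  (p.1 = q.1 + 1 ∧ p.2 = q.2) ∨ (q.1 = p.1 ∧ q.2 = p.2 + 1)

/-- `P` is a lattice path in `lam` from box `a` to box `b`: a nonempty sequence of boxes of
`lam` starting at `a`, ending at `b`, each step going up or right. -/
def IsLatticePath (lam : ℕ → ℕ) (a b : ℕ × ℕ) (P : List (ℕ × ℕ)) : Prop :=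
  P ≠ [] ∧ P.head? = some a ∧ P.getLast? = some b ∧
    (∀ q ∈ P, inDiagram lam q) ∧ List.Chain' isStep P

/-- The signed weight of a path: the product of `(-1)^{i-1}` over all right steps taken from a
box in row `i` (up steps contribute `1`). -/
def pathWeight : List (ℕ × ℕ) → ℤ
  | [] => 1
  | [_] => 1
  | p :: q :: rest =>
      (if q.1 = p.1 then (-1 : ℤ) ^ (p.1 - 1) else 1) * pathWeight (q :: rest)

/-- `wt(a,b)`: the sum of the signed weights of all lattice paths in `lam` from `a` to `b`. -/
noncomputable def wtSum (lam : ℕ → ℕ) (a b : ℕ × ℕ) : ℤ :=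
  ∑ᶠ P ∈ {P : List (ℕ × ℕ) | IsLatticePath lam a b P}, pathWeight P

/-- The double staircase partition `ρ̃_n`: `(n,n,n-2,n-2,…,2,2)` for even `n` and
`(n,n,n-2,n-2,…,3,3,2)` for odd `n`, as a function sending a row index to its part. -/
def rhoTilde (n i : ℕ) : ℕ :=
  if 1 ≤ i ∧ i ≤ n then (if n % 2 = 1 ∧ i = n then 2 else n - 2 * ((i - 1) / 2)) else 0

theorem diagram_induction (lam : ℕ → ℕ) {motive : ℕ × ℕ → Prop}
    (out : ∀ p, ¬ inDiagram lam p → motive p)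
    (step : ∀ i j, inDiagram lam (i, j) → motive (i - 1, j) → motive (i, j + 1) → motive (i, j)) :
    ∀ p, motive p
  | (i, j) => by
    by_cases hij : inDiagram lam (i, j)
    · refine step i j hij (diagram_induction lam out step (i - 1, j)) ?_
      by_cases hj : j < lam i
      · exact diagram_induction lam out step (i, j + 1)
      · exact out _ fun h => hj h.2.2
    · exact out _ hij
termination_by p => (p.1, lam p.1 - p.2)
decreasing_by
  · exact Prod.Lex.left _ _ (by have := hij.1; omega)
  · exact Prod.Lex.right _ (by omega)

def latticePaths (lam : ℕ → ℕ) (a b : ℕ × ℕ) : Set (List (ℕ × ℕ)) :=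
  {P | IsLatticePath lam a b P}

section Paths

variable {lam : ℕ → ℕ}

lemma mem_latticePaths {a b : ℕ × ℕ} {P : List (ℕ × ℕ)} :
    P ∈ latticePaths lam a b ↔ IsLatticePath lam a b P := Iff.rfl

lemma isLatticePath_iff {a b : ℕ × ℕ} {P : List (ℕ × ℕ)} :
    IsLatticePath lam a b P ↔ P ≠ [] ∧ P.head? = some a ∧ P.getLast? = some b ∧
      (∀ q ∈ P, inDiagram lam q) ∧ P.IsChain isStep := Iff.rfl

lemma wtSum_eq_finsum (a b : ℕ × ℕ) :
    wtSum lam a b = ∑ᶠ P ∈ latticePaths lam a b, pathWeight P := rfl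

lemma isStep_iff {i j : ℕ} {q : ℕ × ℕ} :
    isStep (i, j) q ↔ (0 < i ∧ q = (i - 1, j)) ∨ q = (i, j + 1) := by
  obtain ⟨q1, q2⟩ := q
  simp only [isStep, Prod.mk.injEq]
  omega

lemma length_eq_of_chain_isStep : ∀ {P : List (ℕ × ℕ)} {a b : ℕ × ℕ}, P.head? = some a →
    P.getLast? = some b → P.IsChain isStep → a.1 + b.2 + 1 = b.1 + a.2 + P.length
  | [], _, _, ha, _, _ => by simp at ha
  | [x], a, b, ha, hb, _ => by
    simp only [List.head?_cons, List.getLast?_singleton, Option.some.injEq] at ha hb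
    subst ha hb
    simp
  | x :: y :: P, a, b, ha, hb, hP => by
    simp only [List.head?_cons, Option.some.injEq] at ha
    subst ha
    rw [List.getLast?_cons_cons] at hb
    rw [List.isChain_cons_cons] at hP
    have := length_eq_of_chain_isStep (List.head?_cons ..) hb hP.2
    simp only [List.length_cons] at this ⊢
    rcases hP.1 with ⟨h1, h2⟩ | ⟨h1, h2⟩ <;> omega

lemma isLatticePath_cons_iff {a b c : ℕ × ℕ} {Q : List (ℕ × ℕ)} (hab : a ≠ b) :
    IsLatticePath lam a b (c :: Q) ↔
      c = a ∧ inDiagram lam a ∧ ∃ q, isStep a q ∧ IsLatticePath lam q b Q := by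
  rcases Q with _ | ⟨q, Q⟩
  · simp only [isLatticePath_iff, List.head?_cons, List.getLast?_singleton, Option.some.injEq]
    constructor
    · rintro ⟨-, rfl, rfl, -⟩; exact absurd rfl hab
    · rintro ⟨-, -, q, -, h, -⟩; exact absurd rfl h
  · simp only [isLatticePath_iff, List.head?_cons, Option.some.injEq, List.getLast?_cons_cons,
      List.mem_cons, forall_eq_or_imp, List.isChain_cons_cons, ne_eq, reduceCtorEq,
      not_false_eq_true, true_and]
    constructor
    · rintro ⟨rfl, hb, ⟨hc, hQ⟩, hs, hch⟩
      exact ⟨rfl, hc, q, hs, rfl, hb, hQ, hch⟩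
    · rintro ⟨rfl, hc, q', hs, rfl, hb, hQ, hch⟩
      exact ⟨rfl, hb, ⟨hc, hQ⟩, hs, hch⟩

lemma latticePaths_of_not_inDiagram {a : ℕ × ℕ} (b : ℕ × ℕ) (ha : ¬ inDiagram lam a) :
    latticePaths lam a b = ∅ := by
  refine Set.eq_empty_of_forall_notMem ?_
  rintro P ⟨-, hhead, -, hmem, -⟩
  exact ha (hmem a (List.mem_of_mem_head? hhead))

lemma latticePaths_self {b : ℕ × ℕ} (hb : inDiagram lam b) :
    latticePaths lam b b = {[b]} := by
  ext P
  simp only [mem_latticePaths, Set.mem_singleton_iff]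
  constructor
  · rintro ⟨hP, hhead, hlast, -, hch⟩
    have := length_eq_of_chain_isStep hhead hlast hch
    have hlen : P.length = 1 := by omega
    obtain ⟨x, rfl⟩ := List.length_eq_one_iff.mp hlen
    simpa using hhead
  · rintro rfl
    exact ⟨by simp, rfl, rfl, by simpa using hb, List.isChain_singleton _⟩

lemma latticePaths_disjoint {a a' : ℕ × ℕ} (b : ℕ × ℕ) (h : a ≠ a') :
    Disjoint (latticePaths lam a b) (latticePaths lam a' b) :=
  Set.disjoint_left.mpr fun _ hP hP' => h (Option.some.inj (hP.2.1.symm.trans hP'.2.1))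

lemma latticePaths_eq_union {i j : ℕ} {b : ℕ × ℕ} (hij : inDiagram lam (i, j))
    (hb : (i, j) ≠ b) :
    latticePaths lam (i, j) b =
      List.cons (i, j) '' latticePaths lam (i - 1, j) b ∪
        List.cons (i, j) '' latticePaths lam (i, j + 1) b := by
  ext (_ | ⟨c, Q⟩)
  · simp [latticePaths, IsLatticePath]
  · simp only [mem_latticePaths, isLatticePath_cons_iff hb, isStep_iff,
      Set.mem_union, Set.mem_image, List.cons.injEq]
    have hi : 0 < i := hij.1
    aesop

lemma pathWeight_cons {p q : ℕ × ℕ} {Q : List (ℕ × ℕ)} (hq : Q.head? = some q) :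
    pathWeight (p :: Q) = (if q.1 = p.1 then (-1 : ℤ) ^ (p.1 - 1) else 1) * pathWeight Q := by
  rcases Q with _ | ⟨q', Q⟩
  · simp at hq
  · obtain rfl := Option.some.inj hq
    rfl

variable (lam) in
lemma latticePaths_finite (b : ℕ × ℕ) (a : ℕ × ℕ) :
    (latticePaths lam a b).Finite := by
  induction a using diagram_induction lam with
  | out a ha => simp [latticePaths_of_not_inDiagram b ha]
  | step i j hij hup hright =>
    by_cases hb : (i, j) = b
    · subst hb; simp [latticePaths_self hij]
    · rw [latticePaths_eq_union hij hb]
      exact (hup.image _).union (hright.image _)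

lemma wtSum_of_not_inDiagram {a : ℕ × ℕ} (b : ℕ × ℕ) (ha : ¬ inDiagram lam a) :
    wtSum lam a b = 0 := by
  simp [wtSum_eq_finsum, latticePaths_of_not_inDiagram b ha]

lemma wtSum_self {b : ℕ × ℕ} (hb : inDiagram lam b) : wtSum lam b b = 1 := by
  simp [wtSum_eq_finsum, latticePaths_self hb, pathWeight]

theorem wtSum_rec {i j : ℕ} {b : ℕ × ℕ} (hij : inDiagram lam (i, j))
    (hb : (i, j) ≠ b) :
    wtSum lam (i, j) b = wtSum lam (i - 1, j) b + (-1) ^ (i - 1) * wtSum lam (i, j + 1) b := by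
  have hi : 0 < i := hij.1
  simp only [wtSum_eq_finsum]
  rw [latticePaths_eq_union hij hb,
    finsum_mem_union ((Set.disjoint_image_iff List.cons_injective).mpr
      (latticePaths_disjoint b (by simp)))
      ((latticePaths_finite ..).image _) ((latticePaths_finite ..).image _),
    finsum_mem_image List.cons_injective.injOn, finsum_mem_image List.cons_injective.injOn,
    mul_finsum_mem]
  congr 1 <;> refine finsum_mem_congr rfl fun Q hQ => ?_ <;> rw [pathWeight_cons hQ.2.1]
  · simp [show i - 1 ≠ i by omega]
  · simp

theorem wtSum_eq_of_recurrence (hlam : ∀ i, 1 ≤ i → lam (i + 1) ≤ lam i)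
    {b : ℕ × ℕ} (hb : inDiagram lam b) (f : ℕ × ℕ → ℤ) (hfb : f b = 1)
    (hfirst : ∀ j, f (0, j) = 0)
    (hpast : ∀ i j, inDiagram lam (i, j) → ¬ inDiagram lam (i, j + 1) → (i, j) ≠ b →
      f (i, j + 1) = 0)
    (hrec : ∀ i j, inDiagram lam (i, j) → (i, j) ≠ b →
      f (i, j) = f (i - 1, j) + (-1) ^ (i - 1) * f (i, j + 1)) :
    ∀ p, inDiagram lam p → wtSum lam p b = f p := by
  intro p
  induction p using diagram_induction lam with
  | out p hp => exact fun h => absurd h hp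
  | step i j hij hup hright =>
    intro _
    by_cases hib : (i, j) = b
    · rw [hib, wtSum_self hb, hfb]
    have up : wtSum lam (i - 1, j) b = f (i - 1, j) := by
      by_cases h : inDiagram lam (i - 1, j)
      · exact hup h
      obtain ⟨hi, hj, hji⟩ : 1 ≤ i ∧ 1 ≤ j ∧ j ≤ lam i := hij
      obtain rfl : i = 1 := by
        by_contra hi1
        have := hlam (i - 1) (by omega)
        rw [Nat.sub_add_cancel hi] at this
        exact h ⟨by omega, hj, hji.trans this⟩
      rw [wtSum_of_not_inDiagram b h, hfirst]
    have right : wtSum lam (i, j + 1) b = f (i, j + 1) := by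
      by_cases h : inDiagram lam (i, j + 1)
      · exact hright h
      · rw [wtSum_of_not_inDiagram b h, hpast i j hij h hib]
    rw [wtSum_rec hij hib, up, right, hrec i j hij hib]

end Paths

-- `C(n+k, k) - C(n+k, k-1)`, with the second term written so that it vanishes at `k = 0`.
def catalanTriangle (n k : ℕ) : ℤ :=
  (n + k).choose k - (n + k).choose (n + 1)

@[simp]
lemma catalanTriangle_zero_right (n : ℕ) : catalanTriangle n 0 = 1 := by
  simp [catalanTriangle]

@[simp]
lemma catalanTriangle_succ_self (n : ℕ) : catalanTriangle n (n + 1) = 0 := by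
  simp [catalanTriangle]

lemma catalanTriangle_succ_succ (n k : ℕ) :
    catalanTriangle (n + 1) (k + 1) = catalanTriangle (n + 1) k + catalanTriangle n (k + 1) := by
  simp only [catalanTriangle, show n + 1 + (k + 1) = n + k + 1 + 1 by ring,
    Nat.choose_succ_succ' (n + k + 1), show n + 1 + k = n + k + 1 by ring,
    show n + (k + 1) = n + k + 1 by ring, Nat.cast_add]
  ring

lemma catalanTriangle_self (n : ℕ) : catalanTriangle n n = catalan n := by
  have key : (2 * n).choose (n + 1) * (n + 1) = (2 * n).choose n * n := by
    rw [Nat.choose_succ_right_eq]; congr 1; omega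
  have hcat : ((n + 1) * catalan n : ℤ) = (2 * n).choose n := by
    exact_mod_cast succ_mul_catalan_eq_centralBinom n
  have hpos : (n + 1 : ℤ) ≠ 0 := by positivity
  apply mul_left_cancel₀ hpos
  rw [hcat, catalanTriangle, ← two_mul]
  have key' : ((2 * n).choose (n + 1) * (n + 1) : ℤ) = (2 * n).choose n * n := by
    exact_mod_cast key
  linear_combination -key'

lemma catalanTriangle_succ_pred (n : ℕ) : catalanTriangle (n + 1) n = catalan (n + 1) := by
  rw [← catalanTriangle_self, catalanTriangle_succ_succ, catalanTriangle_succ_self, add_zero]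

lemma rhoTilde_succ_le (n : ℕ) {i : ℕ} (hi : 1 ≤ i) : rhoTilde n (i + 1) ≤ rhoTilde n i := by
  unfold rhoTilde
  split_ifs <;> omega

lemma inDiagram_rhoTilde_iff {k i j : ℕ} :
    inDiagram (rhoTilde (2 * k + 1)) (i, j) ↔
      1 ≤ i ∧ 1 ≤ j ∧ (i ≤ 2 * k ∧ j + 2 * ((i - 1) / 2) ≤ 2 * k + 1 ∨ i = 2 * k + 1 ∧ j ≤ 2) := by
  unfold inDiagram rhoTilde
  split_ifs <;> omega

-- `wt((i, j), (1, 2k+1))` in `ρ̃_{2k+1}`.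
def wtRowEnd1 (k : ℕ) (p : ℕ × ℕ) : ℤ :=
  if p.1 = 0 ∨ (Even p.1 ∧ Even p.2) then 0 else catalanTriangle (k - p.2 / 2) ((p.1 - 1) / 2)

namespace wtRowEnd1

@[simp]
lemma zero_left (k j : ℕ) : wtRowEnd1 k (0, j) = 0 := by
  simp [wtRowEnd1]

@[simp]
lemma even_even (k m c : ℕ) : wtRowEnd1 k (2 * m, 2 * c) = 0 := by
  simp [wtRowEnd1]

@[simp]
lemma odd_even (k m c : ℕ) : wtRowEnd1 k (2 * m + 1, 2 * c) = catalanTriangle (k - c) m := by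
  simp [wtRowEnd1]

@[simp]
lemma odd_odd (k m c : ℕ) : wtRowEnd1 k (2 * m + 1, 2 * c + 1) = catalanTriangle (k - c) m := by
  simp [wtRowEnd1]
  congr 2; omega

@[simp]
lemma even_odd (k m c : ℕ) : wtRowEnd1 k (2 * (m + 1), 2 * c + 1) = catalanTriangle (k - c) m := by
  simp [wtRowEnd1]
  congr 1 <;> omega

end wtRowEnd1

lemma wtRowEnd1_rec {k i j : ℕ} (hij : inDiagram (rhoTilde (2 * k + 1)) (i, j)) :
    wtRowEnd1 k (i, j) = wtRowEnd1 k (i - 1, j) + (-1) ^ (i - 1) * wtRowEnd1 k (i, j + 1) := by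
  rw [inDiagram_rhoTilde_iff] at hij
  obtain ⟨m, rfl | rfl⟩ : ∃ m, i = 2 * m + 1 ∨ i = 2 * (m + 1) := ⟨(i - 1) / 2, by omega⟩ <;>
    obtain ⟨c, rfl | rfl⟩ := Nat.even_or_odd' j <;>
    simp only [Nat.add_sub_cancel, show 2 * (m + 1) - 1 = 2 * m + 1 by omega,
      show 2 * c + 1 + 1 = 2 * (c + 1) by ring, pow_succ, pow_mul,
      wtRowEnd1.even_even, wtRowEnd1.odd_even, wtRowEnd1.odd_odd, wtRowEnd1.even_odd]
  · ring
  · rcases m with _ | m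
    · simp
    · obtain ⟨a, ha⟩ : ∃ a, k - c = a + 1 := ⟨k - c - 1, by omega⟩
      rw [wtRowEnd1.even_odd, ha, show k - (c + 1) = a by omega, catalanTriangle_succ_succ]
      ring
  · ring
  · ring

lemma wtRowEnd1_eq_zero_past_end {k i j : ℕ} (hk : 1 ≤ k)
    (hij : inDiagram (rhoTilde (2 * k + 1)) (i, j))
    (hij' : ¬ inDiagram (rhoTilde (2 * k + 1)) (i, j + 1)) (hb : (i, j) ≠ (1, 2 * k + 1)) :
    wtRowEnd1 k (i, j + 1) = 0 := by
  rw [inDiagram_rhoTilde_iff] at hij hij'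
  obtain ⟨m, rfl | rfl⟩ : ∃ m, i = 2 * m + 1 ∨ i = 2 * (m + 1) := ⟨(i - 1) / 2, by omega⟩
  · obtain ⟨hm, rfl⟩ | ⟨rfl, rfl⟩ : (1 ≤ m ∧ j = 2 * (k - m) + 1) ∨ (m = k ∧ j = 2) := by
      simp only [ne_eq, Prod.mk.injEq] at hb; omega
    · obtain ⟨m, rfl⟩ := Nat.exists_eq_add_of_le' hm
      rw [show 2 * (k - (m + 1)) + 1 + 1 = 2 * (k - m) by omega, wtRowEnd1.odd_even,
        show k - (k - m) = m by omega, catalanTriangle_succ_self]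
    · rw [show 2 + 1 = 2 * 1 + 1 from rfl, wtRowEnd1.odd_odd]
      obtain ⟨k, rfl⟩ := Nat.exists_eq_add_of_le' hk
      simp
  · obtain rfl : j = 2 * (k - m) + 1 := by omega
    rw [show 2 * (k - m) + 1 + 1 = 2 * (k - m + 1) by ring, wtRowEnd1.even_even]

-- `wt((i, j), (2, 2k+1))` in `ρ̃_{2k+1}`.
def wtRowEnd2 (k : ℕ) (p : ℕ × ℕ) : ℤ :=
  if p.1 ≤ 1 then 0
  else if p.1 = 2 * k + 1 then
    if p.2 = 1 then catalan k - catalan (k - 1) else if p.2 = 2 then -catalan (k - 1) else 0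
  else if Odd p.1 ∧ Even p.2 then 0
  else (-1) ^ (p.2 + 1) * catalanTriangle (k - p.2 / 2) ((p.1 - 2) / 2)

namespace wtRowEnd2

@[simp]
lemma zero_left (k j : ℕ) : wtRowEnd2 k (0, j) = 0 := by
  simp [wtRowEnd2]

@[simp]
lemma one_left (k j : ℕ) : wtRowEnd2 k (1, j) = 0 := by
  simp [wtRowEnd2]

@[simp]
lemma even_even (k m c : ℕ) :
    wtRowEnd2 k (2 * (m + 1), 2 * c) = -catalanTriangle (k - c) m := by
  simp [wtRowEnd2, show 2 * (m + 1) ≠ 2 * k + 1 by omega, show ¬2 * (m + 1) ≤ 1 by omega,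
    Nat.not_odd_iff_even.mpr (even_two_mul _), pow_succ, pow_mul]
  congr 1; omega

@[simp]
lemma even_odd (k m c : ℕ) :
    wtRowEnd2 k (2 * (m + 1), 2 * c + 1) = catalanTriangle (k - c) m := by
  simp [wtRowEnd2, show 2 * (m + 1) ≠ 2 * k + 1 by omega, show ¬2 * (m + 1) ≤ 1 by omega,
    Nat.not_odd_iff_even.mpr (even_two_mul _), pow_succ, pow_mul]
  congr 1 <;> omega

lemma odd_even {k m : ℕ} (c : ℕ) (hm : m ≠ k) : wtRowEnd2 k (2 * m + 1, 2 * c) = 0 := by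
  simp [wtRowEnd2, hm]

lemma odd_odd {k m : ℕ} (c : ℕ) (hm : m + 1 ≠ k) :
    wtRowEnd2 k (2 * (m + 1) + 1, 2 * c + 1) = catalanTriangle (k - c) m := by
  simp [wtRowEnd2, hm, pow_succ, pow_mul]
  congr 1 <;> omega

lemma last_one (k : ℕ) (hk : 1 ≤ k) : wtRowEnd2 k (2 * k + 1, 1) = catalan k - catalan (k - 1) := by
  simp [wtRowEnd2]; omega

lemma last_two (k : ℕ) (hk : 1 ≤ k) : wtRowEnd2 k (2 * k + 1, 2) = -catalan (k - 1) := by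
  simp [wtRowEnd2]; omega

lemma last_three (k : ℕ) : wtRowEnd2 k (2 * k + 1, 3) = 0 := by
  simp [wtRowEnd2]

end wtRowEnd2

lemma wtRowEnd2_rec_last_row {k j : ℕ} (hj : j = 1 ∨ j = 2) :
    wtRowEnd2 (k + 1) (2 * (k + 1) + 1, j) =
      wtRowEnd2 (k + 1) (2 * (k + 1), j) + wtRowEnd2 (k + 1) (2 * (k + 1) + 1, j + 1) := by
  obtain rfl | rfl := hj
  · rw [wtRowEnd2.last_one _ (by omega), wtRowEnd2.last_two _ (by omega),
      show wtRowEnd2 (k + 1) (2 * (k + 1), 1) = _ from wtRowEnd2.even_odd _ k 0,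
      Nat.sub_zero, catalanTriangle_succ_pred]
    ring
  · rw [wtRowEnd2.last_two _ (by omega), wtRowEnd2.last_three,
      show wtRowEnd2 (k + 1) (2 * (k + 1), 2) = _ from wtRowEnd2.even_even _ k 1,
      Nat.add_sub_cancel, catalanTriangle_self]
    ring

lemma wtRowEnd2_rec {k i j : ℕ} (hij : inDiagram (rhoTilde (2 * k + 1)) (i, j)) :
    wtRowEnd2 k (i, j) = wtRowEnd2 k (i - 1, j) + (-1) ^ (i - 1) * wtRowEnd2 k (i, j + 1) := by
  rw [inDiagram_rhoTilde_iff] at hij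
  obtain ⟨m, rfl | rfl⟩ : ∃ m, i = 2 * m + 1 ∨ i = 2 * (m + 1) := ⟨(i - 1) / 2, by omega⟩
  · rw [Nat.add_sub_cancel, pow_mul, neg_one_sq, one_pow, one_mul]
    rcases m with _ | m
    · simp
    by_cases hmk : m + 1 = k
    · subst hmk
      exact wtRowEnd2_rec_last_row (by omega)
    · obtain ⟨c, rfl | rfl⟩ := Nat.even_or_odd' j
      · rw [wtRowEnd2.odd_even _ hmk, wtRowEnd2.even_even, wtRowEnd2.odd_odd _ hmk]
        ring
      · rw [wtRowEnd2.odd_odd _ hmk, wtRowEnd2.even_odd, show 2 * c + 1 + 1 = 2 * (c + 1) by ring,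
          wtRowEnd2.odd_even _ hmk]
        ring
  · rw [show 2 * (m + 1) - 1 = 2 * m + 1 by omega, pow_succ, pow_mul, neg_one_sq, one_pow, one_mul]
    obtain ⟨c, rfl | rfl⟩ := Nat.even_or_odd' j
    · rw [wtRowEnd2.even_even, wtRowEnd2.odd_even _ (by omega), wtRowEnd2.even_odd]
      ring
    · rw [wtRowEnd2.even_odd, show 2 * c + 1 + 1 = 2 * (c + 1) by ring, wtRowEnd2.even_even]
      rcases m with _ | m
      · simp
      · obtain ⟨a, ha⟩ : ∃ a, k - c = a + 1 := ⟨k - c - 1, by omega⟩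
        rw [wtRowEnd2.odd_odd _ (by omega), ha, show k - (c + 1) = a by omega,
          catalanTriangle_succ_succ]
        ring

lemma wtRowEnd2_eq_zero_past_end {k i j : ℕ} (hij : inDiagram (rhoTilde (2 * k + 1)) (i, j))
    (hij' : ¬ inDiagram (rhoTilde (2 * k + 1)) (i, j + 1)) (hb : (i, j) ≠ (2, 2 * k + 1)) :
    wtRowEnd2 k (i, j + 1) = 0 := by
  rw [inDiagram_rhoTilde_iff] at hij hij'
  obtain ⟨m, rfl | rfl⟩ : ∃ m, i = 2 * m + 1 ∨ i = 2 * (m + 1) := ⟨(i - 1) / 2, by omega⟩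
  · obtain ⟨rfl, rfl⟩ | ⟨hmk, rfl⟩ : (m = k ∧ j = 2) ∨ (m < k ∧ j = 2 * (k - m) + 1) := by omega
    · exact wtRowEnd2.last_three m
    · rw [show 2 * (k - m) + 1 + 1 = 2 * (k - m + 1) by ring, wtRowEnd2.odd_even _ hmk.ne]
  · obtain ⟨hm, rfl⟩ : 1 ≤ m ∧ j = 2 * (k - m) + 1 := by
      simp only [ne_eq, Prod.mk.injEq] at hb; omega
    obtain ⟨m, rfl⟩ := Nat.exists_eq_add_of_le' hm
    rw [show 2 * (k - (m + 1)) + 1 + 1 = 2 * (k - m) by omega, wtRowEnd2.even_even,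
      show k - (k - m) = m by omega, catalanTriangle_succ_self, neg_zero]

/-- In the double staircase partition `ρ̃_{2k+1}` (for `k ≥ 1`), the
signed-weighted lattice path sums satisfy `wt((2k+1,1),(1,2k+1)) = C_k`,
`wt((2k+1,2),(1,2k+1)) = 0` and `wt((2k+1,2),(2,2k+1)) = -C_{k-1}`. -/
theorem stmt8 (k : ℕ) (hk : 1 ≤ k) :
    wtSum (rhoTilde (2 * k + 1)) (2 * k + 1, 1) (1, 2 * k + 1) = (catalan k : ℤ) ∧
    wtSum (rhoTilde (2 * k + 1)) (2 * k + 1, 2) (1, 2 * k + 1) = 0 ∧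
    wtSum (rhoTilde (2 * k + 1)) (2 * k + 1, 2) (2, 2 * k + 1) = -(catalan (k - 1) : ℤ) := by
  have wt1 := wtSum_eq_of_recurrence (fun _ => rhoTilde_succ_le _) (b := (1, 2 * k + 1))
    (inDiagram_rhoTilde_iff.mpr (by omega)) (wtRowEnd1 k)
    (by simpa using wtRowEnd1.odd_odd k 0 k) (wtRowEnd1.zero_left k)
    (fun _ _ => wtRowEnd1_eq_zero_past_end hk) (fun _ _ h _ => wtRowEnd1_rec h)
  have wt2 := wtSum_eq_of_recurrence (fun _ => rhoTilde_succ_le _) (b := (2, 2 * k + 1))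
    (inDiagram_rhoTilde_iff.mpr (by omega)) (wtRowEnd2 k)
    (by simpa using wtRowEnd2.even_odd k 0 k) (wtRowEnd2.zero_left k)
    (fun _ _ => wtRowEnd2_eq_zero_past_end) (fun _ _ h _ => wtRowEnd2_rec h)
  refine ⟨?_, ?_, ?_⟩
  · rw [wt1 (2 * k + 1, 1) (inDiagram_rhoTilde_iff.mpr (by omega)),
      show wtRowEnd1 k (2 * k + 1, 1) = _ from wtRowEnd1.odd_odd _ _ 0,
      Nat.sub_zero, catalanTriangle_self]
  · obtain ⟨k, rfl⟩ := Nat.exists_eq_add_of_le' hk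
    rw [wt1 (2 * (k + 1) + 1, 2) (inDiagram_rhoTilde_iff.mpr (by omega)),
      show wtRowEnd1 (k + 1) (2 * (k + 1) + 1, 2) = _ from wtRowEnd1.odd_even _ _ 1,
      Nat.add_sub_cancel, catalanTriangle_succ_self]
  · rw [wt2 (2 * k + 1, 2) (inDiagram_rhoTilde_iff.mpr (by omega)), wtRowEnd2.last_two _ hk]
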